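/- Let ξ be a Gödel numbering of a language containing a binary smash function symbol # (interpreted as (m, n) ↦ 2^{|m|·|n|} where |m| is the binary length of m), and suppose there is a polynomial P such that ξ(A) < 2^{P(|A|)} for all expressions A, where |A| is string length. Then ξ is not regular for this language: there exists a closed term t with ev(t) > ξ(t). -/

import Mathlib

/-- Closed terms of a language containing 0, S and the binary smash function #. -/
inductive SmashTm where
  | zero : SmashTm
  | succ : SmashTm → SmashTm
  | smash : SmashTm → SmashTm → SmashTm
deriving DecidableEq

/-- Evaluation in the standard model, where `#` is interpreted as
`(m, n) ↦ 2^(|m|·|n|)` with `|m|` the binary length of `m`. -/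
def SmashTm.eval : SmashTm → ℕ
  | .zero => 0
  | .succ t => t.eval + 1
  | .smash s t => 2 ^ (Nat.size s.eval * Nat.size t.eval)

/-- String length of a term: `(s # t)` has two brackets and the symbol `#`. -/
def SmashTm.len : SmashTm → ℕ
  | .zero => 1
  | .succ t => t.len + 1
  | .smash s t => s.len + t.len + 3

/-! A term of length `6n + 3` can have value at least `2^(2^n)`: smashing with `SS0` doubles
the binary length of the value. A code bounded by `2^(P(length))` is therefore eventually smaller
than the value, because the polynomial `P(6n + 3)` is eventually below the exponential `2^n`. -/

open Polynomial Filter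

theorem Polynomial.eval_le_eval_one_mul_pow_natDegree (P : ℕ[X]) {m : ℕ} (hm : 1 ≤ m) :
    P.eval m ≤ P.eval 1 * m ^ P.natDegree := by
  rw [eval_eq_sum_range, eval_eq_sum_range, Finset.sum_mul]
  refine Finset.sum_le_sum fun i hi => ?_
  rw [one_pow, mul_one]
  exact Nat.mul_le_mul_left _ (Nat.pow_le_pow_right hm (Finset.mem_range_succ_iff.mp hi))

theorem eventually_mul_pow_le_two_pow (c d : ℕ) :
    ∀ᶠ n : ℕ in atTop, c * n ^ d ≤ 2 ^ n := by
  have hlittleO := (isLittleO_pow_const_const_pow_of_one_lt (R := ℝ) d one_lt_two).const_mul_left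
    (c : ℝ)
  filter_upwards [hlittleO.bound one_pos] with n hn
  simp only [norm_mul, norm_pow, Real.norm_natCast, Real.norm_ofNat, one_mul] at hn
  exact_mod_cast hn

theorem Polynomial.eventually_eval_le_two_pow (P : ℕ[X]) :
    ∀ᶠ n : ℕ in atTop, P.eval n ≤ 2 ^ n := by
  filter_upwards [eventually_mul_pow_le_two_pow (P.eval 1) P.natDegree, eventually_ge_atTop 1]
    with n hn h1
  exact (P.eval_le_eval_one_mul_pow_natDegree h1).trans hn

namespace SmashTm

def two : SmashTm := .succ (.succ .zero)

def tower : ℕ → SmashTm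
  | 0 => two
  | n + 1 => .smash two (tower n)

theorem len_tower (n : ℕ) : (tower n).len = 6 * n + 3 := by
  induction n with
  | zero => rfl
  | succ n ih =>
    simp only [tower, len, two, ih]
    omega

theorem two_pow_two_pow_le_eval_tower (n : ℕ) : 2 ^ 2 ^ n ≤ (tower n).eval := by
  induction n with
  | zero => exact le_refl 2
  | succ n ih =>
    have hsize_two : 2 ≤ Nat.size 2 := Nat.lt_size.mpr le_rfl
    have hsize_tower : 2 ^ n + 1 ≤ Nat.size (tower n).eval := Nat.lt_size.mpr ih
    calc 2 ^ 2 ^ (n + 1) ≤ 2 ^ (Nat.size 2 * Nat.size (tower n).eval) := by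
          apply Nat.pow_le_pow_right two_pos
          rw [pow_succ']
          exact Nat.mul_le_mul hsize_two (by omega)
      _ = (tower (n + 1)).eval := rfl

end SmashTm

theorem smash_not_regular_general (ξ : SmashTm → ℕ)
    (P : Polynomial ℕ) (hP : ∀ A : SmashTm, ξ A < 2 ^ P.eval A.len) :
    ∃ t : SmashTm, ξ t < t.eval := by
  obtain ⟨n, hn⟩ := (P.comp (6 * X + 3)).eventually_eval_le_two_pow.exists
  refine ⟨SmashTm.tower n, ?_⟩
  calc ξ (SmashTm.tower n) < 2 ^ P.eval (SmashTm.tower n).len := hP _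
    _ = 2 ^ (P.comp (6 * X + 3)).eval n := by simp [SmashTm.len_tower]
    _ ≤ 2 ^ 2 ^ n := Nat.pow_le_pow_right two_pos hn
    _ ≤ (SmashTm.tower n).eval := SmashTm.two_pow_two_pow_le_eval_tower n

/-- If a Gödel numbering `ξ` of a language with the smash function satisfies
`ξ A < 2^(P(|A|))` for some polynomial `P`, then `ξ` is not regular: there is a
closed term whose value exceeds its code. -/
theorem smash_not_regular (ξ : SmashTm → ℕ) (hξ : Function.Injective ξ)
    (P : Polynomial ℕ) (hP : ∀ A : SmashTm, ξ A < 2 ^ P.eval A.len) :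
    ∃ t : SmashTm, ξ t < t.eval :=
  smash_not_regular_general ξ P hP
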